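/- Let K be a field, > a local degree ordering on K[x_1,...,x_n], I ⊂ K[x_1,...,x_n] an ideal with dim_K K[x]_⟨x⟩/I < ∞ and highest corner m = HC(I). Let f_1,...,f_k generate I, let d = deg(m)+1, let m' be a monomial with deg(m') > d, and set f̂_i = f_i + a_i·m' for arbitrary a_i ∈ K. Then f̂_1,...,f̂_k generate the ideal I·K[x]_⟨x⟩ in K[x]_⟨x⟩. -/

import Mathlib

open MvPolynomial

/-- A local monomial ordering on monomials in `n` variables: a multiplicatively
compatible strict total order with `1 > x_i` for all `i`. -/
structure LocalMonomialOrder (n : ℕ) where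
  lt : (Fin n →₀ ℕ) → (Fin n →₀ ℕ) → Prop
  irrefl : ∀ a, ¬ lt a a
  trans : ∀ {a b c}, lt a b → lt b c → lt a c
  total : ∀ a b, a ≠ b → lt a b ∨ lt b a
  add_right : ∀ {a b} (c), lt a b → lt (a + c) (b + c)
  lt_one : ∀ i, lt (Finsupp.single i 1) 0

variable {K : Type*} [Field K] {n : ℕ}

/-- `m` is the leading monomial (w.r.t. `o`) of `f`. -/
def IsLeadMonomial (o : LocalMonomialOrder n) (f : MvPolynomial (Fin n) K)
    (m : Fin n →₀ ℕ) : Prop :=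
  m ∈ f.support ∧ ∀ m' ∈ f.support, m' ≠ m → o.lt m' m

/-- The leading ideal `L(I)`. -/
noncomputable def leadingIdeal (o : LocalMonomialOrder n) (I : Ideal (MvPolynomial (Fin n) K)) :
    Ideal (MvPolynomial (Fin n) K) :=
  Ideal.span {p | ∃ f ∈ I, f ≠ 0 ∧ ∃ m, IsLeadMonomial o f m ∧ p = monomial m (1 : K)}

/-- `m` is a highest corner of `I`. -/
def IsHighestCorner (o : LocalMonomialOrder n) (I : Ideal (MvPolynomial (Fin n) K))
    (m : Fin n →₀ ℕ) : Prop :=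
  monomial m (1 : K) ∉ leadingIdeal o I ∧
    ∀ m', o.lt m' m → monomial m' (1 : K) ∈ leadingIdeal o I

/-- total degree of a monomial -/
def mdeg (m : Fin n →₀ ℕ) : ℕ := m.sum fun _ e => e

/-- a local degree ordering refines the negative total degree -/
def LocalMonomialOrder.IsDegreeOrder (o : LocalMonomialOrder n) : Prop :=
  ∀ a b : Fin n →₀ ℕ, mdeg b < mdeg a → o.lt a b

/-- the maximal ideal generated by the variables -/
noncomputable abbrev mxId (K : Type*) [Field K] (n : ℕ) : Ideal (MvPolynomial (Fin n) K) :=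
  Ideal.span (Set.range X)

theorem mxId_eq_ker (K : Type*) [Field K] (n : ℕ) :
    mxId K n = RingHom.ker (constantCoeff (σ := Fin n) (R := K)) := by
  ext x
  show x ∈ Ideal.span (Set.range (X : Fin n → MvPolynomial (Fin n) K)) ↔ _
  rw [← Set.image_univ, mem_ideal_span_X_image]
  simp only [RingHom.mem_ker, constantCoeff_eq, Set.mem_univ, true_and]
  constructor
  · intro h
    by_contra hc
    obtain ⟨i, hi⟩ := h 0 (by simpa [mem_support_iff] using hc)
    simp at hi
  · intro h m hm
    by_contra hc
    push_neg at hc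
    have : m = 0 := by ext i; simpa using hc i
    rw [mem_support_iff] at hm
    exact hm (this ▸ h)

instance (K : Type*) [Field K] (n : ℕ) : (mxId K n).IsPrime :=
  mxId_eq_ker K n ▸ RingHom.ker_isPrime _

/-- the localization `K[x]_⟨x⟩` -/
abbrev LocX (K : Type*) [Field K] (n : ℕ) := Localization.AtPrime (mxId K n)

section Aux

variable {K : Type*} [Field K] {n : ℕ}

lemma mdeg_apply_le (ν : Fin n →₀ ℕ) (i : Fin n) : ν i ≤ mdeg ν := by
  rw [mdeg, Finsupp.sum]
  by_cases h : ν i = 0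
  · simp [h]
  · exact Finset.single_le_sum (fun _ _ => Nat.zero_le _) (Finsupp.mem_support_iff.2 h)

lemma mdeg_add (a b : Fin n →₀ ℕ) : mdeg (a + b) = mdeg a + mdeg b := by
  simp [mdeg, Finsupp.sum_add_index]

lemma mdeg_single (i : Fin n) (c : ℕ) : mdeg (Finsupp.single i c) = c := by
  simp [mdeg, Finsupp.sum_single_index]

lemma finite_mdeg_le (N : ℕ) : {ν : Fin n →₀ ℕ | mdeg ν ≤ N}.Finite := by
  apply Set.Finite.subset (Set.finite_Iic (Finsupp.equivFunOnFinite.symm fun _ => N))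
  intro ν hν
  rw [Set.mem_Iic, Finsupp.le_def]
  intro i
  exact le_trans (mdeg_apply_le ν i) hν

/-- if all monomials of `p` are sent into `J`, so is `p`. -/
lemma mem_of_support_mem {A : Type*} [CommRing A] (ψ : MvPolynomial (Fin n) K →+* A)
    (J : Ideal A) (p : MvPolynomial (Fin n) K)
    (h : ∀ ν ∈ p.support, ψ (monomial ν 1) ∈ J) : ψ p ∈ J := by
  rw [p.as_sum, map_sum]
  refine Ideal.sum_mem _ fun ν hν => ?_
  have : monomial ν (coeff ν p) = C (coeff ν p) * monomial ν 1 := by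
    rw [C_mul_monomial, mul_one]
  rw [this, map_mul]
  exact Ideal.mul_mem_left _ _ (h ν hν)

lemma exists_lead_le {o : LocalMonomialOrder n} {I : Ideal (MvPolynomial (Fin n) K)}
    {μ : Fin n →₀ ℕ} (h : monomial μ (1 : K) ∈ leadingIdeal o I) :
    ∃ g ∈ I, g ≠ 0 ∧ ∃ l, IsLeadMonomial o g l ∧ l ≤ μ := by
  have hset : {p | ∃ f ∈ I, f ≠ 0 ∧ ∃ m, IsLeadMonomial o f m ∧ p = monomial m (1 : K)}
      = (fun s => monomial s (1 : K)) '' {l | ∃ f ∈ I, f ≠ 0 ∧ IsLeadMonomial o f l} := by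
    ext p
    constructor
    · rintro ⟨f, hf, hf0, mm, hlm, rfl⟩; exact ⟨mm, ⟨f, hf, hf0, hlm⟩, rfl⟩
    · rintro ⟨l, ⟨f, hf, hf0, hlm⟩, rfl⟩; exact ⟨f, hf, hf0, l, hlm, rfl⟩
  rw [leadingIdeal, hset, mem_ideal_span_monomial_image] at h
  obtain ⟨l, ⟨g, hg, hg0, hlm⟩, hle⟩ := h μ (by simp [mem_support_iff])
  exact ⟨g, hg, hg0, l, hlm, hle⟩

/-- one reduction step: for any monomial `μ` of degree `> mdeg m` there is `h ∈ I`
with coefficient `1` at `μ` and all other monomials strictly `o`-smaller than `μ`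
(and still of degree `> mdeg m`). -/
lemma reduction_step {o : LocalMonomialOrder n} (ho : o.IsDegreeOrder)
    {I : Ideal (MvPolynomial (Fin n) K)} {m : Fin n →₀ ℕ} (hm : IsHighestCorner o I m)
    {μ : Fin n →₀ ℕ} (hμ : mdeg m < mdeg μ) :
    ∃ h ∈ I, coeff μ h = 1 ∧
      ∀ ν ∈ h.support, ν ≠ μ → o.lt ν μ ∧ mdeg m < mdeg ν := by
  have hlead : monomial μ (1 : K) ∈ leadingIdeal o I := hm.2 μ (ho μ m hμ)
  obtain ⟨g, hgI, hg0, l, hlm, hle⟩ := exists_lead_le hlead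
  set t : Fin n →₀ ℕ := μ - l with ht
  have htl : t + l = μ := tsub_add_cancel_of_le hle
  have hc : coeff l g ≠ 0 := mem_support_iff.1 hlm.1
  refine ⟨C (coeff l g)⁻¹ * (monomial t 1 * g), ?_, ?_, ?_⟩
  · exact Ideal.mul_mem_left _ _ (Ideal.mul_mem_left _ _ hgI)
  · rw [coeff_C_mul, coeff_monomial_mul', if_pos (htl ▸ le_add_right le_rfl : t ≤ μ),
      one_mul]
    have : μ - t = l := by rw [← htl]; simp
    rw [this, inv_mul_cancel₀ hc]
  · intro ν hν hνμ
    rw [mem_support_iff, coeff_C_mul, coeff_monomial_mul'] at hν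
    by_cases htν : t ≤ ν
    · rw [if_pos htν] at hν
      have hν' : ν - t ∈ g.support := by
        rw [mem_support_iff]
        intro h0
        rw [h0, mul_zero, mul_zero] at hν
        exact hν rfl
      have hνt : (ν - t) + t = ν := tsub_add_cancel_of_le htν
      have hne : ν - t ≠ l := by
        intro h0
        apply hνμ
        rw [← hνt, h0, ← htl, add_comm]
      have hlt : o.lt ν μ := by
        have := o.add_right t (hlm.2 _ hν' hne)
        rwa [hνt, add_comm l t, htl] at this
      refine ⟨hlt, ?_⟩
      by_contra hdeg
      push_neg at hdeg
      exact o.irrefl ν (o.trans hlt (ho μ ν (lt_of_le_of_lt hdeg hμ)))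
    · rw [if_neg htν] at hν
      simp at hν
  
lemma monomial_mem_mxId_pow (μ : Fin n →₀ ℕ) :
    (monomial μ (1 : K)) ∈ (mxId K n) ^ (mdeg μ) := by
  generalize hd : mdeg μ = D
  induction D generalizing μ with
  | zero => rw [pow_zero, Ideal.one_eq_top]; exact Submodule.mem_top
  | succ d ih =>
    have hμ0 : μ ≠ 0 := by
      intro h0
      rw [h0] at hd
      simp [mdeg] at hd
    obtain ⟨i, hi⟩ := Finsupp.ne_iff.1 hμ0
    rw [Finsupp.coe_zero, Pi.zero_apply] at hi
    have hsle : Finsupp.single i 1 ≤ μ := by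
      rw [Finsupp.single_le_iff]
      omega
    set μ' := μ - Finsupp.single i 1 with hμ'
    have hμsum : μ' + Finsupp.single i 1 = μ := tsub_add_cancel_of_le hsle
    have hdeg' : mdeg μ' = d := by
      have := mdeg_add μ' (Finsupp.single i 1)
      rw [hμsum, hd, mdeg_single] at this
      omega
    have : monomial μ (1 : K) = monomial μ' 1 * X i := by
      rw [X, monomial_mul, mul_one, hμsum]
    rw [this, pow_succ]
    exact Ideal.mul_mem_mul (ih μ' hdeg') (Ideal.subset_span ⟨i, rfl⟩)

set_option synthInstance.maxHeartbeats 1000000 in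
set_option maxHeartbeats 1000000 in
/-- from finite dimensionality: all monomials of sufficiently high degree lie in
the extended ideal. -/
lemma high_degree_mem (I : Ideal (MvPolynomial (Fin n) K))
    (hfin : FiniteDimensional K
      (LocX K n ⧸ I.map (algebraMap (MvPolynomial (Fin n) K) (LocX K n)))) :
    ∃ N : ℕ, ∀ μ : Fin n →₀ ℕ, N ≤ mdeg μ →
      algebraMap (MvPolynomial (Fin n) K) (LocX K n) (monomial μ 1) ∈
        I.map (algebraMap (MvPolynomial (Fin n) K) (LocX K n)) := by
  set φ := algebraMap (MvPolynomial (Fin n) K) (LocX K n)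
  set J := I.map φ with hJdef
  rcases eq_or_ne J ⊤ with hJ | hJ
  · exact ⟨0, fun μ _ => by rw [hJ]; exact Submodule.mem_top⟩
  haveI : Nontrivial (LocX K n ⧸ J) := Ideal.Quotient.nontrivial_iff.mpr hJ
  haveI : IsLocalRing (LocX K n ⧸ J) :=
    IsLocalRing.of_surjective' (Ideal.Quotient.mk J) Ideal.Quotient.mk_surjective
  haveI : IsArtinianRing (LocX K n ⧸ J) := IsArtinianRing.of_finite K _
  obtain ⟨N, hN⟩ := IsArtinianRing.isNilpotent_jacobson_bot (R := LocX K n ⧸ J)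
  replace hN : (IsLocalRing.maximalIdeal (LocX K n ⧸ J)) ^ N = 0 := by
    convert hN using 2
    exact (IsLocalRing.jacobson_eq_maximalIdeal (R := LocX K n ⧸ J) _ (by exact bot_ne_top)).symm
  set ψ : MvPolynomial (Fin n) K →+* LocX K n ⧸ J := (Ideal.Quotient.mk J).comp φ with hψ
  have hmap : (mxId K n).map ψ ≤ IsLocalRing.maximalIdeal (LocX K n ⧸ J) := by
    have hms : (mxId K n).map ψ = Ideal.span (⇑ψ '' Set.range X) := Ideal.map_span ψ _
    rw [hms, Ideal.span_le]
    rintro _ ⟨_, ⟨i, rfl⟩, rfl⟩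
    show ψ (X i) ∈ IsLocalRing.maximalIdeal (LocX K n ⧸ J)
    rw [IsLocalRing.mem_maximalIdeal, mem_nonunits_iff]
    intro hu
    obtain ⟨v, hv⟩ := hu.exists_right_inv
    obtain ⟨y, rfl⟩ := Ideal.Quotient.mk_surjective v
    rw [hψ, RingHom.comp_apply, ← map_mul, ← map_one (Ideal.Quotient.mk J),
      Ideal.Quotient.eq] at hv
    have hXm : φ (X i) ∈ IsLocalRing.maximalIdeal (LocX K n) :=
      (IsLocalization.AtPrime.to_map_mem_maximal_iff _ (mxId K n) _).2
        (Ideal.subset_span ⟨i, rfl⟩)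
    have h1 : (1 : LocX K n) ∈ IsLocalRing.maximalIdeal (LocX K n) := by
      have := Ideal.sub_mem _ (Ideal.mul_mem_right y _ hXm)
        (IsLocalRing.le_maximalIdeal hJ hv)
      simpa using this
    exact (Ideal.ne_top_iff_one _).1 (IsLocalRing.maximalIdeal.isMaximal _).ne_top h1
  refine ⟨N, fun μ hμ => ?_⟩
  rw [← Ideal.Quotient.eq_zero_iff_mem]
  have h1 : ψ (monomial μ 1) ∈ ((mxId K n).map ψ) ^ N := by
    have h2 : monomial μ (1 : K) ∈ (mxId K n) ^ N :=
      Ideal.pow_le_pow_right hμ (monomial_mem_mxId_pow μ)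
    have h3 := Ideal.mem_map_of_mem ψ h2
    exact Ideal.le_comap_pow ψ N (Ideal.pow_right_mono Ideal.le_comap_map N h2)
  have h4 : ((mxId K n).map ψ) ^ N ≤
      (IsLocalRing.maximalIdeal (LocX K n ⧸ J)) ^ N := Ideal.pow_right_mono hmap N
  have h5 := h4 h1
  rw [hN] at h5
  rw [Ideal.zero_eq_bot] at h5
  exact (Submodule.mem_bot _).1 h5

/-- key fact: every monomial of degree `> mdeg (HC I)` lies in `I·K[x]_⟨x⟩`. -/
lemma monomial_mem_of_highestCorner_lt {o : LocalMonomialOrder n} (ho : o.IsDegreeOrder)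
    {I : Ideal (MvPolynomial (Fin n) K)}
    (hfin : FiniteDimensional K
      (LocX K n ⧸ I.map (algebraMap (MvPolynomial (Fin n) K) (LocX K n))))
    {m : Fin n →₀ ℕ} (hm : IsHighestCorner o I m)
    {μ : Fin n →₀ ℕ} (hμ : mdeg m < mdeg μ) :
    algebraMap (MvPolynomial (Fin n) K) (LocX K n) (monomial μ 1) ∈
      I.map (algebraMap (MvPolynomial (Fin n) K) (LocX K n)) := by
  set φ := algebraMap (MvPolynomial (Fin n) K) (LocX K n)
  set J := I.map φ with hJdef
  obtain ⟨N, hA⟩ := high_degree_mem I hfin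
  set S : Set (Fin n →₀ ℕ) := {ν | mdeg ν ≤ N} with hS
  suffices H : ∀ d : ℕ, ∀ μ : Fin n →₀ ℕ,
      (S ∩ {ν | o.lt ν μ}).ncard ≤ d → mdeg m < mdeg μ → φ (monomial μ 1) ∈ J by
    exact H _ μ le_rfl hμ
  intro d
  induction d using Nat.strong_induction_on with
  | _ d ih =>
    intro μ hcard hμ'
    by_cases hNμ : N ≤ mdeg μ
    · exact hA μ hNμ
    push_neg at hNμ
    obtain ⟨h, hhI, hc1, htail⟩ := reduction_step ho hm hμ'
    have hrep : monomial μ (1 : K) = h - (h - monomial μ 1) := by ring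
    rw [hrep, map_sub]
    refine Ideal.sub_mem _ (Ideal.mem_map_of_mem _ hhI) ?_
    refine mem_of_support_mem (φ : MvPolynomial (Fin n) K →+* LocX K n) J _ fun ν hν => ?_
    have hνμ : ν ≠ μ := by
      rintro rfl
      rw [mem_support_iff, coeff_sub, hc1, coeff_monomial, if_pos rfl, sub_self] at hν
      exact hν rfl
    have hνh : ν ∈ h.support := by
      rw [mem_support_iff, coeff_sub, coeff_monomial, if_neg (Ne.symm hνμ), sub_zero] at hν
      exact mem_support_iff.2 hν
    obtain ⟨hlt, hdeg⟩ := htail ν hνh hνμ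
    by_cases hNν : N ≤ mdeg ν
    · exact hA ν hNν
    push_neg at hNν
    have hsubset : S ∩ {ρ | o.lt ρ ν} ⊆ S ∩ {ρ | o.lt ρ μ} := by
      rintro ρ ⟨hρS, hρlt⟩
      exact ⟨hρS, o.trans hρlt hlt⟩
    have hssub : S ∩ {ρ | o.lt ρ ν} ⊂ S ∩ {ρ | o.lt ρ μ} :=
      (Set.ssubset_iff_of_subset hsubset).2
        ⟨ν, ⟨hNν.le, hlt⟩, fun hx => o.irrefl ν hx.2⟩
    have hlt' : (S ∩ {ρ | o.lt ρ ν}).ncard < (S ∩ {ρ | o.lt ρ μ}).ncard :=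
      Set.ncard_lt_ncard hssub ((finite_mdeg_le N).inter_of_left _)
    exact ih _ (lt_of_lt_of_le hlt' hcard) ν le_rfl hdeg

end Aux

/-- perturbing generators of a zero-dimensional ideal `I` by
multiples of a fixed monomial of degree `> deg (HC I) + 1` does not change the
ideal generated in the localization `K[x]_⟨x⟩`. -/
theorem perturbed_generators_span {K : Type*} [Field K] {n : ℕ}
    (o : LocalMonomialOrder n) (ho : o.IsDegreeOrder)
    (I : Ideal (MvPolynomial (Fin n) K))
    (hfin : FiniteDimensional K
      (LocX K n ⧸ I.map (algebraMap (MvPolynomial (Fin n) K) (LocX K n))))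
    (m : Fin n →₀ ℕ) (hm : IsHighestCorner o I m)
    (k : ℕ) (f : Fin k → MvPolynomial (Fin n) K)
    (hI : I = Ideal.span (Set.range f))
    (m' : Fin n →₀ ℕ) (hm' : mdeg m + 1 < mdeg m')
    (a : Fin k → K) :
    Ideal.span (Set.range fun i =>
        algebraMap (MvPolynomial (Fin n) K) (LocX K n)
          (f i + a i • monomial m' (1 : K))) =
      I.map (algebraMap (MvPolynomial (Fin n) K) (LocX K n)) := by
  set φ := algebraMap (MvPolynomial (Fin n) K) (LocX K n) with hφ
  set J := I.map φ with hJdef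
  have hmm' : mdeg m < mdeg m' := by omega
  -- the perturbing monomial lies in J
  have hw : φ (monomial m' 1) ∈ J :=
    monomial_mem_of_highestCorner_lt ho hfin hm hmm'
  set w := φ (monomial m' 1) with hwdef
  -- easy inclusion
  have hle1 : Ideal.span (Set.range fun i => φ (f i + a i • monomial m' (1 : K))) ≤ J := by
    rw [Ideal.span_le]
    rintro _ ⟨i, rfl⟩
    have hfi : f i ∈ I := hI ▸ Ideal.subset_span ⟨i, rfl⟩
    show φ (f i + a i • monomial m' (1 : K)) ∈ J
    rw [map_add]
    refine Ideal.add_mem _ (Ideal.mem_map_of_mem _ hfi) ?_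
    rw [smul_eq_C_mul, map_mul]
    exact Ideal.mul_mem_left _ _ hw
  -- J as a span
  have hJspan : J = Ideal.span (Set.range fun i => φ (f i)) := by
    rw [hJdef, hI, Ideal.map_span, ← Set.range_comp]
    rfl
  -- decompose m' = m'' + single j 1
  have hm'0 : m' ≠ 0 := by
    intro h0
    rw [h0] at hmm'
    simp [mdeg] at hmm'
  obtain ⟨j, hj⟩ := Finsupp.ne_iff.1 hm'0
  rw [Finsupp.coe_zero, Pi.zero_apply] at hj
  have hsle : Finsupp.single j 1 ≤ m' := by
    rw [Finsupp.single_le_iff]; omega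
  set m'' := m' - Finsupp.single j 1 with hm''def
  have hsum : m'' + Finsupp.single j 1 = m' := tsub_add_cancel_of_le hsle
  have hdeg'' : mdeg m < mdeg m'' := by
    have := mdeg_add m'' (Finsupp.single j 1)
    rw [hsum, mdeg_single] at this
    omega
  have hw'' : φ (monomial m'' 1) ∈ J :=
    monomial_mem_of_highestCorner_lt ho hfin hm hdeg''
  -- write monomial m'' as a combination of the f i
  rw [hJspan, Ideal.mem_span_range_iff_exists_fun] at hw''
  obtain ⟨c, hc⟩ := hw''
  -- coefficients in the maximal ideal
  have hXj : φ (X j) ∈ IsLocalRing.maximalIdeal (LocX K n) :=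
    (IsLocalization.AtPrime.to_map_mem_maximal_iff _ (mxId K n) _).2
      (Ideal.subset_span ⟨j, rfl⟩)
  set h : Fin k → LocX K n := fun i => φ (X j) * c i with hhdef
  have hwfact : w = ∑ i, h i * φ (f i) := by
    have : monomial m' (1 : K) = X j * monomial m'' 1 := by
      rw [X, monomial_mul, one_mul, add_comm, hsum]
    rw [hwdef, this, map_mul, ← hc, Finset.mul_sum]
    exact Finset.sum_congr rfl fun i _ => by ring
  set e := ∑ i, h i * φ (C (a i)) with hedef
  have hemem : e ∈ IsLocalRing.maximalIdeal (LocX K n) := by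
    refine Ideal.sum_mem _ fun i _ => ?_
    rw [hhdef]
    have : φ (X j) * c i * φ (C (a i)) = φ (X j) * (c i * φ (C (a i))) := by ring
    rw [this]
    exact Ideal.mul_mem_right _ _ hXj
  have hunit : IsUnit (1 + e) := by
    by_contra hnu
    have h1e : 1 + e ∈ IsLocalRing.maximalIdeal (LocX K n) :=
      (IsLocalRing.mem_maximalIdeal _).2 hnu
    have h1 : (1 : LocX K n) ∈ IsLocalRing.maximalIdeal (LocX K n) := by
      have := Ideal.sub_mem _ h1e hemem
      simpa using this
    exact (Ideal.ne_top_iff_one _).1 (IsLocalRing.maximalIdeal.isMaximal _).ne_top h1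
  set Sp := Ideal.span (Set.range fun i => φ (f i + a i • monomial m' (1 : K))) with hSp
  have hkey : (1 + e) * w ∈ Sp := by
    have hcalc : (1 + e) * w = ∑ i, h i * φ (f i + a i • monomial m' (1 : K)) := by
      have hrhs : ∀ i, h i * φ (f i + a i • monomial m' (1 : K)) =
          h i * φ (f i) + h i * φ (C (a i)) * w := by
        intro i
        rw [map_add, smul_eq_C_mul, map_mul]
        ring
      rw [Finset.sum_congr rfl fun i _ => hrhs i, Finset.sum_add_distrib, ← hwfact,
        ← Finset.sum_mul, ← hedef]
      ring
    rw [hcalc]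
    exact Ideal.sum_mem _ fun i _ =>
      Ideal.mul_mem_left _ _ (Ideal.subset_span ⟨i, rfl⟩)
  have hwSp : w ∈ Sp := by
    obtain ⟨u, hu⟩ := hunit
    have : w = ↑u⁻¹ * ((1 + e) * w) := by
      rw [← hu, ← mul_assoc, Units.inv_mul, one_mul]
    rw [this]
    exact Ideal.mul_mem_left _ _ hkey
  refine le_antisymm hle1 ?_
  rw [hJspan, Ideal.span_le]
  rintro _ ⟨i, rfl⟩
  show φ (f i) ∈ Sp
  have : φ (f i) = φ (f i + a i • monomial m' (1 : K)) - φ (C (a i)) * w := by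
    rw [map_add, smul_eq_C_mul, map_mul]
    ring
  rw [this]
  exact Ideal.sub_mem _ (Ideal.subset_span ⟨i, rfl⟩)
    (Ideal.mul_mem_left _ _ hwSp)
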